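/- Let (L, ∗, α) be a left Hom-Leibniz superalgebra, [x,y] := x∗y − (−1)^{|x||y|} y∗x the supercommutator, and {a,b,c} := −(a∗b)∗α(c). Then for all homogeneous u, v, x, y ∈ L: {α(x), α(y), [u,v]} = [{x,y,u}, α²(v)] + (−1)^{|u|(|x|+|y|)} [α²(u), {x,y,v}]. -/

import Mathlib

/-! Since `α` is multiplicative, `{α(x), α(y), [u,v]} = −α(x∗y)∗[α(u), α(v)]`. The Leibniz
identity says that left multiplication by `α(w)` is an `α`-twisted super-derivation of `∗`, hence
also of the supercommutator; taking `w = x∗y` gives the claim, the signs matching because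
`(−1)^{|w||u|}` squares to `1`. -/

/-- A (multiplicative) Hom-superalgebra: a `ℤ/2`-graded `K`-vector space `L = L₀ ⊕ L₁`
with a parity-respecting bilinear operation `op` and an even multiplicative linear map `map`. -/
structure HomSuperalgebra (K : Type*) [Field K] (L : Type*) [AddCommGroup L] [Module K L] where
  grading : ZMod 2 → Submodule K L
  internal : DirectSum.IsInternal grading
  op : L →ₗ[K] L →ₗ[K] L
  op_mem : ∀ {i j : ZMod 2} {x y : L}, x ∈ grading i → y ∈ grading j → op x y ∈ grading (i + j)
  map : L →ₗ[K] L
  map_even : ∀ {i : ZMod 2} {x : L}, x ∈ grading i → map x ∈ grading i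
  map_op : ∀ x y : L, map (op x y) = op (map x) (map y)

namespace HomSuperalgebra

variable {K : Type*} [Field K] {L : Type*} [AddCommGroup L] [Module K L]

/-- The sign `(−1)^{ij}` attached to parities `i, j`. -/
def sgn (K : Type*) [Field K] (i j : ZMod 2) : K := (-1 : K) ^ (i.val * j.val)

/-- The supercommutator `[x,y] := x∗y − (−1)^{|x||y|} y∗x` of homogeneous elements
of parities `i` and `j`. -/
def br (A : HomSuperalgebra K L) (i j : ZMod 2) (x y : L) : L :=
  A.op x y - sgn K i j • A.op y x

/-- The Hom-associator `as_α(x,y,z) := (x∗y)∗α(z) − α(x)∗(y∗z)`. -/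
def assoc (A : HomSuperalgebra K L) (x y z : L) : L :=
  A.op (A.op x y) (A.map z) - A.op (A.map x) (A.op y z)

/-- The ternary operation `{x,y,z} := −(x∗y)∗α(z)`. -/
def trip (A : HomSuperalgebra K L) (x y z : L) : L :=
  -(A.op (A.op x y) (A.map z))

/-- The left Hom-Leibniz superidentity:
`α(x)∗(y∗z) = (x∗y)∗α(z) + (−1)^{|x||y|} α(y)∗(x∗z)` for homogeneous `x, y, z`. -/
def IsLeftLeibniz (A : HomSuperalgebra K L) : Prop :=
  ∀ (i j k : ZMod 2) (x y z : L),
    x ∈ A.grading i → y ∈ A.grading j → z ∈ A.grading k →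
      A.op (A.map x) (A.op y z)
        = A.op (A.op x y) (A.map z) + sgn K i j • A.op (A.map y) (A.op x z)

theorem sgn_comm (i j : ZMod 2) : sgn K i j = sgn K j i := by
  rw [sgn, sgn, mul_comm]

theorem sgn_add_right (i j k : ZMod 2) : sgn K i (j + k) = sgn K i j * sgn K i k := by
  rw [sgn, sgn, sgn, ← pow_add, ← mul_add, ZMod.val_add]
  exact neg_one_pow_congr (by simp [Nat.even_iff])

theorem sgn_add_left (i j k : ZMod 2) : sgn K (i + j) k = sgn K i k * sgn K j k := by
  rw [sgn_comm, sgn_add_right, sgn_comm k, sgn_comm k]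

theorem sgn_mul_self (i j : ZMod 2) : sgn K i j * sgn K i j = 1 := by
  rw [sgn, ← mul_pow, neg_one_mul, neg_neg, one_pow]

theorem map_br (A : HomSuperalgebra K L) (i j : ZMod 2) (x y : L) :
    A.map (A.br i j x y) = A.br i j (A.map x) (A.map y) := by
  simp only [br, map_sub, map_smul, map_op]

theorem br_neg_left (A : HomSuperalgebra K L) (i j : ZMod 2) (x y : L) :
    A.br i j (-x) y = -A.br i j x y := by
  simp only [br, map_neg, LinearMap.neg_apply, smul_neg]
  abel

theorem br_neg_right (A : HomSuperalgebra K L) (i j : ZMod 2) (x y : L) :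
    A.br i j x (-y) = -A.br i j x y := by
  simp only [br, map_neg, LinearMap.neg_apply, smul_neg]
  abel

theorem IsLeftLeibniz.map_op_br {A : HomSuperalgebra K L} (hL : A.IsLeftLeibniz)
    {r p q : ZMod 2} {w a b : L} (hw : w ∈ A.grading r) (ha : a ∈ A.grading p)
    (hb : b ∈ A.grading q) :
    A.op (A.map w) (A.br p q a b)
      = A.br (r + p) q (A.op w a) (A.map b)
        + sgn K r p • A.br p (r + q) (A.map a) (A.op w b) := by
  simp only [br, map_sub, map_smul, hL r p q w a b hw ha hb, hL r q p w b a hw hb ha,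
    sgn_add_left, sgn_add_right, sgn_comm p r, mul_smul, smul_add, smul_sub]
  linear_combination (norm := module)
    (sgn_mul_self (K := K) r p) • (sgn K p q • A.op (A.op w b) (A.map a))

end HomSuperalgebra

open HomSuperalgebra

variable {K : Type*} [Field K] {L : Type*} [AddCommGroup L] [Module K L]

/-- SHLY7: in a left Hom-Leibniz superalgebra, with `{a,b,c} := −(a∗b)∗α(c)`,
`{α(x), α(y), [u,v]} = [{x,y,u}, α²(v)] + (−1)^{|u|(|x|+|y|)} [α²(u), {x,y,v}]`. -/
theorem shly7 (A : HomSuperalgebra K L) (hL : A.IsLeftLeibniz)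
    (i j p q : ZMod 2) (x y u v : L)
    (hx : x ∈ A.grading i) (hy : y ∈ A.grading j)
    (hu : u ∈ A.grading p) (hv : v ∈ A.grading q) :
    A.trip (A.map x) (A.map y) (A.br p q u v)
      = A.br (i + j + p) q (A.trip x y u) (A.map (A.map v))
        + ((-1 : K) ^ (p.val * (i.val + j.val))) •
            A.br p (i + j + q) (A.map (A.map u)) (A.trip x y v) := by
  have hsign : (-1 : K) ^ (p.val * (i.val + j.val)) = sgn K (i + j) p := by
    rw [sgn_add_left, sgn_comm i, sgn_comm j, sgn, sgn, mul_add, pow_add]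
  have key := hL.map_op_br (A.op_mem hx hy) (A.map_even hu) (A.map_even hv)
  rw [hsign, trip, trip, trip, br_neg_left, br_neg_right, smul_neg, map_br, ← A.map_op, key,
    neg_add]
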